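/- arXiv:1404.5656 — 3 statements merged into one kernel-verified Lean document; each statement's English description precedes it below -/
import Mathlib

section
/- Let ψ(t)=g(t)t^{−1} with g∈𝔐₀ and ∑_{k=1}^∞ ψ(k)<∞. Then for every n∈ℕ: ψ(n)·n ≤ (1/α̲_n(g))·∑_{k=n}^∞ ψ(k), where α̲_n(g)=inf_{t≥n}α(g;t). -/
open MeasureTheory Real Filter Set

noncomputable section

/-- The `L_p` norm (1 ≤ p < ∞) of a 2π-periodic function, computed over one period. -/
def pNorm (p : ℝ) (f : ℝ → ℝ) : ℝ :=
  (∫ t in (0:ℝ)..(2 * π), |f t| ^ p) ^ (1 / p)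

/-- The essential sup norm. -/
def supNorm (f : ℝ → ℝ) : ℝ :=
  essSup (fun t => |f t|) (volume : Measure ℝ)

/-- The kernel `Ψ_β(t) = ∑_{k=1}^∞ ψ(k) cos (k t - β π / 2)`. -/
def kernelPsi (ψ : ℝ → ℝ) (β : ℝ) (t : ℝ) : ℝ :=
  ∑' k : ℕ, ψ ((k + 1 : ℕ) : ℝ) * Real.cos (((k + 1 : ℕ) : ℝ) * t - β * π / 2)

/-- 2π-periodic and integrable over a period. -/
def PeriodicIntegrable (f : ℝ → ℝ) : Prop :=
  Function.Periodic f (2 * π) ∧ IntervalIntegrable f volume 0 (2 * π)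

/-- Membership in the class `L^ψ_{β,1}`. -/
def InClassL (ψ : ℝ → ℝ) (β : ℝ) (f : ℝ → ℝ) : Prop :=
  PeriodicIntegrable f ∧
  ∃ a₀ : ℝ, ∃ φ : ℝ → ℝ,
    Function.Periodic φ (2 * π) ∧ IntervalIntegrable φ volume 0 (2 * π) ∧
    (∫ t in (-π)..π, |φ t|) ≤ 1 ∧ (∫ t in (-π)..π, φ t) = 0 ∧
    ∀ᵐ x : ℝ, f x = a₀ / 2 + (1 / π) * ∫ t in (-π)..π, kernelPsi ψ β (x - t) * φ t

/-- The partial Fourier sum of order `m` of `f`. -/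
def fourierSumR (f : ℝ → ℝ) (m : ℕ) (x : ℝ) : ℝ :=
  (1 / (2 * π)) * (∫ t in (-π)..π, f t) +
  ∑ k ∈ Finset.Icc 1 m,
    (((1 / π) * ∫ t in (-π)..π, f t * Real.cos ((k : ℝ) * t)) * Real.cos ((k : ℝ) * x) +
     ((1 / π) * ∫ t in (-π)..π, f t * Real.sin ((k : ℝ) * t)) * Real.sin ((k : ℝ) * x))

/-- Trigonometric polynomial of degree at most `m`. -/
def IsTrigPoly (m : ℕ) (g : ℝ → ℝ) : Prop :=
  ∃ a b : ℕ → ℝ, ∀ x : ℝ,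
    g x = a 0 + ∑ k ∈ Finset.Icc 1 m,
      (a k * Real.cos ((k : ℝ) * x) + b k * Real.sin ((k : ℝ) * x))

/-- `𝓔_n(L^ψ_{β,1})_s`: deviation of Fourier sums in the `L_s` metric. -/
def EFour (ψ : ℝ → ℝ) (β s : ℝ) (n : ℕ) : ℝ :=
  ⨆ f : {f : ℝ → ℝ // InClassL ψ β f},
    pNorm s (fun x => f.1 x - fourierSumR f.1 (n - 1) x)

/-- `E_n(L^ψ_{β,1})_s`: best approximation by trig polynomials of degree ≤ n-1, `L_s` metric. -/
def EBest (ψ : ℝ → ℝ) (β s : ℝ) (n : ℕ) : ℝ :=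
  ⨆ f : {f : ℝ → ℝ // InClassL ψ β f},
    ⨅ g : {g : ℝ → ℝ // IsTrigPoly (n - 1) g},
      pNorm s (fun x => f.1 x - g.1 x)

/-- `𝓔_n(L^ψ_{β,1})_∞`. -/
def EFourInf (ψ : ℝ → ℝ) (β : ℝ) (n : ℕ) : ℝ :=
  ⨆ f : {f : ℝ → ℝ // InClassL ψ β f},
    supNorm (fun x => f.1 x - fourierSumR f.1 (n - 1) x)

/-- `E_n(L^ψ_{β,1})_∞`. -/
def EBestInf (ψ : ℝ → ℝ) (β : ℝ) (n : ℕ) : ℝ :=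
  ⨆ f : {f : ℝ → ℝ // InClassL ψ β f},
    ⨅ g : {g : ℝ → ℝ // IsTrigPoly (n - 1) g},
      supNorm (fun x => f.1 x - g.1 x)

/-- The set `𝔐`: positive, continuous, convex (downward) functions on `[1,∞)` tending to 0. -/
def MemM (ψ : ℝ → ℝ) : Prop :=
  (∀ t : ℝ, 1 ≤ t → 0 < ψ t) ∧ ContinuousOn ψ (Ici (1:ℝ)) ∧ ConvexOn ℝ (Ici (1:ℝ)) ψ ∧
  Tendsto ψ atTop (nhds 0)

/-- `α(ψ; t) = ψ(t) / (t |ψ'(t+0)|)`, with the right-hand derivative. -/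
def alphaChar (ψ : ℝ → ℝ) (t : ℝ) : ℝ :=
  ψ t / (t * |derivWithin ψ (Ici t) t|)

/-- The subset `𝔐₀` of `𝔐`. -/
def MemM0 (ψ : ℝ → ℝ) : Prop :=
  MemM ψ ∧ ∃ K : ℝ, 0 < K ∧ ∀ t : ℝ, 1 ≤ t → K ≤ alphaChar ψ t

/-- The subset `𝔐_C` of `𝔐`. -/
def MemMC (ψ : ℝ → ℝ) : Prop :=
  MemM ψ ∧ ∃ K₁ K₂ : ℝ, 0 < K₁ ∧ 0 < K₂ ∧
    ∀ t : ℝ, 1 ≤ t → K₁ ≤ alphaChar ψ t ∧ alphaChar ψ t ≤ K₂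

/-- `α̲_x(g) = inf_{t ≥ x} α(g; t)`. -/
def alphaLow (g : ℝ → ℝ) (x : ℝ) : ℝ := ⨅ t : {t : ℝ // x ≤ t}, alphaChar g t.1

/-- `ᾱ_x(g) = sup_{t ≥ x} α(g; t)`. -/
def alphaUp (g : ℝ → ℝ) (x : ℝ) : ℝ := ⨆ t : {t : ℝ // x ≤ t}, alphaChar g t.1

/-- `ξ(s) = max {4 (π/(s-1))^{1/s}, 14 (8π)^{1/s} s}`. -/
def xiConst (s : ℝ) : ℝ :=
  max (4 * (π / (s - 1)) ^ (1 / s)) (14 * (8 * π) ^ (1 / s) * s)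

/-- `∑_{k=n}^∞ ψ^s(k) k^{s-2}`. -/
def tailSumPow (ψ : ℝ → ℝ) (s : ℝ) (n : ℕ) : ℝ :=
  ∑' k : ℕ, ψ ((n + k : ℕ) : ℝ) ^ s * ((n + k : ℕ) : ℝ) ^ (s - 2)

/-- `∑_{k=n}^∞ ψ(k)`. -/
def tailSum (ψ : ℝ → ℝ) (n : ℕ) : ℝ :=
  ∑' k : ℕ, ψ ((n + k : ℕ) : ℝ)

/-!
For `t ≥ n` the definition of `α̲_n(g)` gives `α̲_n(g) |g'(t+0)| ≤ g(t)/t = ψ(t)`, and convexity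
gives `g(t) - g(t+1) ≤ |g'(t+0)|`. Summing over `t = n, n+1, …` telescopes, since `g → 0`, to
`α̲_n(g) g(n) ≤ ∑_{k ≥ n} ψ(k)`, and `g(n) = n ψ(n)`.
-/

theorem le_tsum_of_sub_succ_le {u b : ℕ → ℝ} (hu : Tendsto u atTop (nhds 0)) (hb : Summable b)
    (hub : ∀ k, u k - u (k + 1) ≤ b k) : u 0 ≤ ∑' k, b k := by
  have hpartial : ∀ N, u 0 - u N ≤ ∑ k ∈ Finset.range N, b k := fun N => by
    rw [← Finset.sum_range_sub']
    exact Finset.sum_le_sum fun k _ => hub k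
  have hlhs : Tendsto (fun N => u 0 - u N) atTop (nhds (u 0)) := by
    simpa using tendsto_const_nhds.sub hu
  exact le_of_tendsto_of_tendsto' hlhs hb.hasSum.tendsto_sum_nat hpartial

theorem ConvexOn.derivWithin_Ici_mul_sub_le {g : ℝ → ℝ} {a t u : ℝ}
    (hg : ConvexOn ℝ (Ici a) g) (ht : a ≤ t) (htu : t < u)
    (hd : DifferentiableWithinAt ℝ g (Ici t) t) :
    derivWithin g (Ici t) t * (u - t) ≤ g u - g t := by
  have hslope : derivWithin g (Ici t) t ≤ slope g t u :=
    hg.le_slope_of_hasDerivWithinAt_Ioi ht (ht.trans htu.le) htu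
      (hd.hasDerivWithinAt.mono Ioi_subset_Ici_self)
  rwa [slope_def_field, le_div_iff₀ (sub_pos.2 htu)] at hslope

-- `derivWithin` is `0` off differentiability points, and then `alphaChar` divides by `0`.
theorem differentiableWithinAt_of_alphaChar_pos {g : ℝ → ℝ} {t : ℝ} (h : 0 < alphaChar g t) :
    DifferentiableWithinAt ℝ g (Ici t) t := by
  by_contra hd
  simp [alphaChar, derivWithin_zero_of_not_differentiableWithinAt hd] at h

theorem mul_abs_derivWithin_le_of_le_alphaChar {g : ℝ → ℝ} {t A : ℝ} (ht : 0 < t)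
    (hα : 0 < alphaChar g t) (hA : A ≤ alphaChar g t) :
    A * |derivWithin g (Ici t) t| ≤ g t / t := by
  have hden : 0 < t * |derivWithin g (Ici t) t| := by
    refine lt_of_le_of_ne (by positivity) fun h => ?_
    simp [alphaChar, ← h] at hα
  rw [alphaChar, le_div_iff₀ hden] at hA
  rw [le_div_iff₀ ht]
  linarith

theorem le_alphaLow {g : ℝ → ℝ} {x K : ℝ} (hK : ∀ t, x ≤ t → K ≤ alphaChar g t) :
    K ≤ alphaLow g x :=
  have : Nonempty {t : ℝ // x ≤ t} := ⟨⟨x, le_rfl⟩⟩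
  le_ciInf fun t => hK t.1 t.2

theorem alphaLow_le_alphaChar {g : ℝ → ℝ} {x K t : ℝ} (hK : ∀ t, x ≤ t → K ≤ alphaChar g t)
    (ht : x ≤ t) : alphaLow g x ≤ alphaChar g t := by
  refine ciInf_le ⟨K, ?_⟩ (⟨t, ht⟩ : {t : ℝ // x ≤ t})
  rintro _ ⟨⟨s, hs⟩, rfl⟩
  exact hK s hs

theorem alphaLow_mul_sub_add_one_le {g : ℝ → ℝ} {x K t : ℝ} (hg : ConvexOn ℝ (Ici x) g)
    (hx : 0 < x) (hK : 0 < K) (hKα : ∀ t, x ≤ t → K ≤ alphaChar g t) (ht : x ≤ t) :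
    alphaLow g x * (g t - g (t + 1)) ≤ g t / t := by
  have hα : 0 < alphaChar g t := hK.trans_le (hKα t ht)
  have hdiff : g t - g (t + 1) ≤ -derivWithin g (Ici t) t := by
    have := hg.derivWithin_Ici_mul_sub_le ht (lt_add_one t)
      (differentiableWithinAt_of_alphaChar_pos hα)
    rw [add_sub_cancel_left, mul_one] at this
    linarith
  calc alphaLow g x * (g t - g (t + 1))
      ≤ alphaLow g x * |derivWithin g (Ici t) t| :=
        mul_le_mul_of_nonneg_left (hdiff.trans (neg_le_abs _))
          (hK.le.trans (le_alphaLow hKα))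
    _ ≤ g t / t := mul_abs_derivWithin_le_of_le_alphaChar (hx.trans_le ht) hα
        (alphaLow_le_alphaChar hKα ht)

/-- Lemma 3 (first part): ψ(n)·n ≤ (1/α̲_n(g))·∑_{k=n}^∞ ψ(k). -/
theorem statement9 (ψ g : ℝ → ℝ)
    (hψg : ∀ t : ℝ, ψ t = g t * t⁻¹) (hg : MemM0 g)
    (hsum : Summable (fun k : ℕ => ψ ((k + 1 : ℕ) : ℝ))) :
    ∀ n : ℕ, 1 ≤ n →
      ψ (n : ℝ) * (n : ℝ) ≤ (1 / alphaLow g (n : ℝ)) * tailSum ψ n := by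
  obtain ⟨⟨-, -, hconv, hlim⟩, K, hK, hKα⟩ := hg
  intro n hn
  have hn1 : (1 : ℝ) ≤ n := by exact_mod_cast hn
  have hKαn : ∀ t, (n : ℝ) ≤ t → K ≤ alphaChar g t := fun t ht => hKα t (hn1.trans ht)
  have hconvn : ConvexOn ℝ (Ici (n : ℝ)) g := hconv.subset (Ici_subset_Ici.2 hn1) (convex_Ici _)
  have hA : 0 < alphaLow g n := hK.trans_le (le_alphaLow hKαn)
  have htail : Summable fun k : ℕ => ψ ((n + k : ℕ) : ℝ) := by
    refine ((summable_nat_add_iff (n - 1)).2 hsum).congr fun k => ?_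
    rw [show k + (n - 1) + 1 = n + k by omega]
  have hψn : ψ n * n = g n := by rw [hψg]; field_simp
  have hlimn : Tendsto (fun k : ℕ => alphaLow g n * g ((n + k : ℕ) : ℝ)) atTop (nhds 0) := by
    simpa using tendsto_const_nhds.mul
      (hlim.comp (tendsto_atTop_add_const_left _ (n : ℝ) tendsto_natCast_atTop_atTop))
  have hmain : alphaLow g n * g n ≤ tailSum ψ n := by
    refine le_tsum_of_sub_succ_le hlimn htail fun k => ?_
    have hk : (n : ℝ) ≤ ((n + k : ℕ) : ℝ) := by exact_mod_cast Nat.le_add_right n k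
    rw [← Nat.add_assoc, Nat.cast_succ, ← mul_sub, hψg, ← div_eq_mul_inv]
    exact alphaLow_mul_sub_add_one_le hconvn (by linarith) hK hKαn hk
  rwa [hψn, one_div, ← div_eq_inv_mul, le_div_iff₀ hA, mul_comm]
end
end

section
/- Let ψ(t)=g(t)t^{−1} with g∈𝔐_C and ∑_{k=1}^∞ ψ(k)<∞. Then for every n∈ℕ: (1/ᾱ_n(g))·(n·α̲_n(g)/(1+n·α̲_n(g)))·∑_{k=n}^∞ ψ(k) ≤ ψ(n)·n ≤ (1/α̲_n(g))·∑_{k=n}^∞ ψ(k), where α̲_n(g)=inf_{t≥n}α(g;t) and ᾱ_n(g)=sup_{t≥n}α(g;t). -/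
open MeasureTheory Real Filter Set

noncomputable section

/-!
Write `D t` for the right derivative of `g` at `t`. Since `α(g; t) > 0` forces `D t ≠ 0`, `g` is
right-differentiable, and as `g` is convex, positive and tends to `0`, `D t < 0`. Convexity gives
`|D (t + 1)| ≤ g t - g (t + 1) ≤ |D t|`, while `g t / t = α(g; t) |D t|`; hence for `k ≥ n`
`α̲ₙ (g k - g (k + 1)) ≤ ψ k` and `ψ (k + 1) ≤ ᾱₙ (g k - g (k + 1))`. Summing these telescoping
bounds gives `α̲ₙ g n ≤ ∑_{k ≥ n} ψ k ≤ ψ n + ᾱₙ g n` (the second one also shows that the series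
converges), and `g n = n ψ n` turns them into the two estimates.
-/

open Topology

lemma ConvexOn.slope_le_of_hasDerivWithinAt_Ioi {S : Set ℝ} {f : ℝ → ℝ} {x y z f' : ℝ}
    (hfc : ConvexOn ℝ S f) (hx : x ∈ S) (hz : z ∈ S) (hxy : x < y) (hyz : y < z)
    (hf' : HasDerivWithinAt f f' (Ioi y) y) : slope f x y ≤ f' := by
  have hy : y ∈ S := hfc.1.ordConnected.out hx hz ⟨hxy.le, hyz.le⟩
  apply ge_of_tendsto ((hasDerivWithinAt_iff_tendsto_slope' self_notMem_Ioi).mp hf')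
  filter_upwards [Ioo_mem_nhdsGT hyz] with t ⟨hyt, htz⟩
  rw [slope_comm]
  exact hfc.slope_mono hy ⟨hx, hxy.ne⟩
    ⟨hfc.1.ordConnected.out hy hz ⟨hyt.le, htz.le⟩, hyt.ne'⟩ (hxy.trans hyt).le

section UnitStep

variable {g : ℝ → ℝ} {a t g' : ℝ}

lemma ConvexOn.sub_add_one_le_neg_of_hasDerivWithinAt (hg : ConvexOn ℝ (Ici a) g) (ht : a ≤ t)
    (hg' : HasDerivWithinAt g g' (Ici t) t) : g t - g (t + 1) ≤ -g' := by
  have h := hg.le_slope_of_hasDerivWithinAt_Ioi (mem_Ici.2 ht) (mem_Ici.2 (by linarith))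
    (lt_add_one t) (hg'.mono Ioi_subset_Ici_self)
  rw [slope_def_field, add_sub_cancel_left, div_one] at h
  linarith

lemma ConvexOn.neg_le_sub_add_one_of_hasDerivWithinAt (hg : ConvexOn ℝ (Ici a) g) (ht : a ≤ t)
    (hg' : HasDerivWithinAt g g' (Ici (t + 1)) (t + 1)) : -g' ≤ g t - g (t + 1) := by
  have h := hg.slope_le_of_hasDerivWithinAt_Ioi (z := t + 2) (mem_Ici.2 ht)
    (mem_Ici.2 (by linarith)) (lt_add_one t) (by linarith) (hg'.mono Ioi_subset_Ici_self)
  rw [slope_def_field, add_sub_cancel_left, div_one] at h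
  linarith

end UnitStep

section Telescoping

variable {u v : ℕ → ℝ} {c l : ℝ}

lemma Antitone.hasSum_sub_succ (hu : Antitone u) (hlim : Tendsto u atTop (𝓝 l)) :
    HasSum (fun k => u k - u (k + 1)) (u 0 - l) := by
  rw [hasSum_iff_tendsto_nat_of_nonneg (fun k => sub_nonneg.2 (hu k.le_succ))]
  simp_rw [Finset.sum_range_sub']
  exact tendsto_const_nhds.sub hlim

lemma mul_le_tsum_of_mul_sub_succ_le (hu : Antitone u) (hlim : Tendsto u atTop (𝓝 0))
    (hv : Summable v) (h : ∀ k, c * (u k - u (k + 1)) ≤ v k) : c * u 0 ≤ ∑' k, v k := by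
  simpa using hasSum_le h ((hu.hasSum_sub_succ hlim).mul_left c) hv.hasSum

lemma summable_of_le_mul_sub_succ (hu : Antitone u) (hlim : Tendsto u atTop (𝓝 0))
    (hv : ∀ k, 0 ≤ v k) (h : ∀ k, v (k + 1) ≤ c * (u k - u (k + 1))) : Summable v :=
  (summable_nat_add_iff 1).1 <|
    Summable.of_nonneg_of_le (fun _ => hv _) h ((hu.hasSum_sub_succ hlim).mul_left c).summable

lemma tsum_le_add_mul_of_le_mul_sub_succ (hu : Antitone u) (hlim : Tendsto u atTop (𝓝 0))
    (hv : Summable v) (h : ∀ k, v (k + 1) ≤ c * (u k - u (k + 1))) :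
    ∑' k, v k ≤ v 0 + c * u 0 := by
  have htail := hasSum_le h ((summable_nat_add_iff 1).2 hv).hasSum
    ((hu.hasSum_sub_succ hlim).mul_left c)
  rw [hv.tsum_eq_zero_add]
  simpa using htail

end Telescoping

section AlphaChar

variable {g : ℝ → ℝ} {t x : ℝ}

lemma rightDeriv_ne_zero_of_alphaChar_pos (h : 0 < alphaChar g t) :
    derivWithin g (Ici t) t ≠ 0 := by
  intro h0
  -- `x / 0 = 0`, so a vanishing right derivative gives `α(g; t) = 0`
  simp [alphaChar, h0] at h

lemma alphaChar_mul_abs_rightDeriv (ht : t ≠ 0) (hd : derivWithin g (Ici t) t ≠ 0) :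
    alphaChar g t * |derivWithin g (Ici t) t| = g t / t := by
  rw [alphaChar]
  field_simp

lemma MemM.rightDeriv_neg (hg : MemM g) (ht : 1 ≤ t)
    (hd : DifferentiableWithinAt ℝ g (Ici t) t) : derivWithin g (Ici t) t < 0 := by
  obtain ⟨y, hgy, hty⟩ :=
    ((hg.2.2.2.eventually (gt_mem_nhds (hg.1 t ht))).and (eventually_gt_atTop t)).exists
  calc derivWithin g (Ici t) t ≤ slope g t y :=
        hg.2.2.1.le_slope_of_hasDerivWithinAt_Ioi (mem_Ici.2 ht) (mem_Ici.2 (ht.trans hty.le))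
          hty (hd.hasDerivWithinAt.mono Ioi_subset_Ici_self)
    _ < 0 := by
        rw [slope_def_field]
        exact div_neg_of_neg_of_pos (by linarith) (by linarith)

namespace MemMC

lemma alphaChar_pos (hg : MemMC g) (ht : 1 ≤ t) : 0 < alphaChar g t := by
  obtain ⟨-, K₁, _, hK₁, -, hK⟩ := hg
  exact hK₁.trans_le (hK t ht).1

lemma hasDerivWithinAt_rightDeriv (hg : MemMC g) (ht : 1 ≤ t) :
    HasDerivWithinAt g (derivWithin g (Ici t) t) (Ici t) t :=
  (differentiableWithinAt_of_derivWithin_ne_zero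
    (rightDeriv_ne_zero_of_alphaChar_pos (hg.alphaChar_pos ht))).hasDerivWithinAt

lemma rightDeriv_neg (hg : MemMC g) (ht : 1 ≤ t) : derivWithin g (Ici t) t < 0 :=
  hg.1.rightDeriv_neg ht (hg.hasDerivWithinAt_rightDeriv ht).differentiableWithinAt

lemma add_one_le (hg : MemMC g) (ht : 1 ≤ t) : g (t + 1) ≤ g t := by
  have h := hg.1.2.2.1.neg_le_sub_add_one_of_hasDerivWithinAt ht
    (hg.hasDerivWithinAt_rightDeriv (by linarith))
  linarith [hg.rightDeriv_neg (t := t + 1) (by linarith)]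

lemma bddBelow_alphaChar (hg : MemMC g) (hx : 1 ≤ x) :
    BddBelow (range fun t : {t : ℝ // x ≤ t} => alphaChar g t.1) := by
  obtain ⟨-, K₁, _, -, -, hK⟩ := hg
  exact ⟨K₁, by rintro _ ⟨t, rfl⟩; exact (hK t.1 (hx.trans t.2)).1⟩

lemma bddAbove_alphaChar (hg : MemMC g) (hx : 1 ≤ x) :
    BddAbove (range fun t : {t : ℝ // x ≤ t} => alphaChar g t.1) := by
  obtain ⟨-, _, K₂, -, -, hK⟩ := hg
  exact ⟨K₂, by rintro _ ⟨t, rfl⟩; exact (hK t.1 (hx.trans t.2)).2⟩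

lemma alphaLow_le_alphaChar (hg : MemMC g) (hx : 1 ≤ x) (hxt : x ≤ t) :
    alphaLow g x ≤ alphaChar g t :=
  ciInf_le (hg.bddBelow_alphaChar hx) ⟨t, hxt⟩

lemma alphaChar_le_alphaUp (hg : MemMC g) (hx : 1 ≤ x) (hxt : x ≤ t) :
    alphaChar g t ≤ alphaUp g x :=
  le_ciSup (hg.bddAbove_alphaChar hx) ⟨t, hxt⟩

lemma alphaLow_pos (hg : MemMC g) (hx : 1 ≤ x) : 0 < alphaLow g x := by
  obtain ⟨-, K₁, _, hK₁, -, hK⟩ := hg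
  have : Nonempty {t : ℝ // x ≤ t} := ⟨⟨x, le_rfl⟩⟩
  exact hK₁.trans_le (le_ciInf fun t => (hK t.1 (hx.trans t.2)).1)

lemma alphaLow_le_alphaUp (hg : MemMC g) (hx : 1 ≤ x) : alphaLow g x ≤ alphaUp g x :=
  (hg.alphaLow_le_alphaChar hx le_rfl).trans (hg.alphaChar_le_alphaUp hx le_rfl)

lemma alphaLow_mul_sub_add_one_le (hg : MemMC g) (hx : 1 ≤ x) (hxt : x ≤ t) :
    alphaLow g x * (g t - g (t + 1)) ≤ g t / t := by
  have ht : 1 ≤ t := hx.trans hxt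
  have hD := hg.rightDeriv_neg ht
  calc alphaLow g x * (g t - g (t + 1))
      ≤ alphaLow g x * |derivWithin g (Ici t) t| := by
        gcongr
        · exact (hg.alphaLow_pos hx).le
        rw [abs_of_neg hD]
        exact hg.1.2.2.1.sub_add_one_le_neg_of_hasDerivWithinAt ht
          (hg.hasDerivWithinAt_rightDeriv ht)
    _ ≤ alphaChar g t * |derivWithin g (Ici t) t| := by
        gcongr
        exact hg.alphaLow_le_alphaChar hx hxt
    _ = g t / t := alphaChar_mul_abs_rightDeriv (by positivity) hD.ne

lemma div_le_alphaUp_mul_sub_add_one (hg : MemMC g) (hx : 1 ≤ x) (hxt : x ≤ t) :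
    g (t + 1) / (t + 1) ≤ alphaUp g x * (g t - g (t + 1)) := by
  have ht : 1 ≤ t := hx.trans hxt
  have hD := hg.rightDeriv_neg (t := t + 1) (by linarith)
  calc g (t + 1) / (t + 1)
      = alphaChar g (t + 1) * |derivWithin g (Ici (t + 1)) (t + 1)| :=
        (alphaChar_mul_abs_rightDeriv (by positivity) hD.ne).symm
    _ ≤ alphaUp g x * |derivWithin g (Ici (t + 1)) (t + 1)| := by
        gcongr
        exact hg.alphaChar_le_alphaUp hx (by linarith)
    _ ≤ alphaUp g x * (g t - g (t + 1)) := by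
        gcongr
        · exact (hg.alphaLow_pos hx).le.trans (hg.alphaLow_le_alphaUp hx)
        rw [abs_of_neg hD]
        exact hg.1.2.2.1.neg_le_sub_add_one_of_hasDerivWithinAt ht
          (hg.hasDerivWithinAt_rightDeriv (by linarith))

end MemMC

end AlphaChar

lemma two_sided_estimate_of_tail_bounds {A B T p n : ℝ} (hA : 0 < A) (hAB : A ≤ B) (hn : 0 < n)
    (hp : 0 ≤ p) (hlow : A * (p * n) ≤ T) (hup : T ≤ p + B * (p * n)) :
    1 / B * (n * A / (1 + n * A)) * T ≤ p * n ∧ p * n ≤ 1 / A * T := by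
  have hB : 0 < B := hA.trans_le hAB
  have hT : 0 ≤ T := (by positivity : 0 ≤ A * (p * n)).trans hlow
  constructor
  · calc 1 / B * (n * A / (1 + n * A)) * T
        ≤ n / (1 + n * B) * T := by
          gcongr
          rw [div_mul_div_comm, div_le_div_iff₀ (by positivity) (by positivity)]
          nlinarith [mul_le_mul_of_nonneg_left hAB (mul_nonneg hn.le hn.le)]
      _ ≤ p * n := by
          rw [div_mul_eq_mul_div, div_le_iff₀ (by positivity)]
          nlinarith
  · rw [one_div, inv_mul_eq_div, le_div_iff₀ hA]
    linarith

theorem statement10_general (ψ g : ℝ → ℝ)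
    (hψg : ∀ t : ℝ, ψ t = g t * t⁻¹) (hg : MemMC g) :
    ∀ n : ℕ, 1 ≤ n →
      (1 / alphaUp g (n : ℝ)) *
          ((n : ℝ) * alphaLow g (n : ℝ) / (1 + (n : ℝ) * alphaLow g (n : ℝ))) *
          tailSum ψ n ≤ ψ (n : ℝ) * (n : ℝ) ∧
      ψ (n : ℝ) * (n : ℝ) ≤ (1 / alphaLow g (n : ℝ)) * tailSum ψ n := by
  intro n hn
  have hn1 : (1 : ℝ) ≤ n := by exact_mod_cast hn
  have hψ (t : ℝ) : ψ t = g t / t := by rw [hψg, div_eq_mul_inv]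
  have hψ_nonneg (t : ℝ) (ht : 1 ≤ t) : 0 ≤ ψ t := by
    rw [hψ]
    exact div_nonneg (hg.1.1 t ht).le (by linarith)
  have hle (k : ℕ) : (n : ℝ) ≤ ((n + k : ℕ) : ℝ) := by exact_mod_cast n.le_add_right k
  have hsucc (k : ℕ) : ((n + (k + 1) : ℕ) : ℝ) = ((n + k : ℕ) : ℝ) + 1 := by push_cast; ring
  set u : ℕ → ℝ := fun k => g ((n + k : ℕ) : ℝ)
  have hu : Antitone u := antitone_nat_of_succ_le fun k => by
    simp only [u, hsucc]
    exact hg.add_one_le (hn1.trans (hle k))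
  have hlim : Tendsto u atTop (𝓝 0) :=
    hg.1.2.2.2.comp (tendsto_natCast_atTop_atTop.comp
      (tendsto_atTop_mono (fun k => k.le_add_left n) tendsto_id))
  have hlow (k : ℕ) : alphaLow g n * (u k - u (k + 1)) ≤ ψ ((n + k : ℕ) : ℝ) := by
    simp only [u, hsucc, hψ]
    exact hg.alphaLow_mul_sub_add_one_le hn1 (hle k)
  have hup (k : ℕ) : ψ ((n + (k + 1) : ℕ) : ℝ) ≤ alphaUp g n * (u k - u (k + 1)) := by
    simp only [u, hsucc, hψ]
    exact hg.div_le_alphaUp_mul_sub_add_one hn1 (hle k)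
  have hsum : Summable fun k => ψ ((n + k : ℕ) : ℝ) :=
    summable_of_le_mul_sub_succ hu hlim (fun k => hψ_nonneg _ (hn1.trans (hle k))) hup
  have hgn : u 0 = ψ n * n := by simp [u, hψ, (by linarith : (n : ℝ) ≠ 0)]
  refine two_sided_estimate_of_tail_bounds (hg.alphaLow_pos hn1) (hg.alphaLow_le_alphaUp hn1)
    (by linarith) (hψ_nonneg n hn1) (hgn ▸ mul_le_tsum_of_mul_sub_succ_le hu hlim hsum hlow)
    (hgn ▸ tsum_le_add_mul_of_le_mul_sub_succ hu hlim hsum hup)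

/-- Lemma 3 (second part): two-sided estimate when g ∈ 𝔐_C. -/
theorem statement10 (ψ g : ℝ → ℝ)
    (hψg : ∀ t : ℝ, ψ t = g t * t⁻¹) (hg : MemMC g)
    (hsum : Summable (fun k : ℕ => ψ ((k + 1 : ℕ) : ℝ))) :
    ∀ n : ℕ, 1 ≤ n →
      (1 / alphaUp g (n : ℝ)) *
          ((n : ℝ) * alphaLow g (n : ℝ) / (1 + (n : ℝ) * alphaLow g (n : ℝ))) *
          tailSum ψ n ≤ ψ (n : ℝ) * (n : ℝ) ∧
      ψ (n : ℝ) * (n : ℝ) ≤ (1 / alphaLow g (n : ℝ)) * tailSum ψ n :=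
  statement10_general ψ g hψg hg
end
end

section
/- For every n∈ℕ and every t with 0<|t|≤π one has |∑_{k=1}^n k·sin(kt) + ∑_{k=n+1}^{2n}(2n+1−k)·sin(kt)| ≤ 3/(2 sin²(t/2)), and consequently |∑_{k=1}^n k·sin(kt) + ∑_{k=n+1}^{2n}(2n+1−k)·sin(kt)| ≤ 3π²/(2t²) for 0<|t|≤π; moreover, in combination with the trivial bound n(n+1) valid for all |t|≤π, the function φ*_n(t)=−(1/(5πn))·(∑_{k=1}^n k·sin(kt)+∑_{k=n+1}^{2n}(2n+1−k)·sin(kt)) satisfies ∫_{−π}^{π}|φ*_n(t)|dt ≤ 1. -/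
open MeasureTheory Real Filter Set

noncomputable section

/-!
With `z = e^{it}`, the tent-shaped coefficients `min (k, 2n+1-k)` are the convolution of two blocks
of ones, so the kernel sum is `Im (z (1 + ⋯ + z^(n-1)) (1 + ⋯ + z^n))`. Each geometric block has
modulus at most its length and at most `2 / |z - 1| = 1 / |sin (t/2)|`; this gives both pointwise
bounds, and Jordan's inequality `|sin (t/2)| ≥ |t|/π` turns the second one into `π²/t²`.
Integrating `n(n+1)` on `|t| ≤ π/(n+1)` and `π²/t²` outside gives `∫ |S| ≤ 4πn`.
-/

section CommRing

variable {R : Type*} [CommRing R]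

lemma sum_range_succ_sub_mul_pow (n : ℕ) (z : R) :
    ∑ j ∈ Finset.range (n + 1), ((n + 1 : R) - j) * z ^ j =
      ∑ j ∈ Finset.range n, ((n : R) - j) * z ^ j + ∑ j ∈ Finset.range (n + 1), z ^ j := by
  rw [Finset.sum_range_succ, Finset.sum_range_succ (fun j => z ^ j), ← add_assoc,
    ← Finset.sum_add_distrib]
  congr 1
  · exact Finset.sum_congr rfl fun j _ => by ring
  · ring

lemma sub_one_mul_sum_range_sub_mul_pow (n : ℕ) (z : R) :
    (z - 1) * ∑ j ∈ Finset.range n, ((n : R) - j) * z ^ j =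
      ∑ j ∈ Finset.range (n + 1), z ^ j - (n + 1) := by
  induction n with
  | zero => simp
  | succ n ih =>
    push_cast
    rw [sum_range_succ_sub_mul_pow, mul_add, ih, mul_comm, geom_sum_mul,
      Finset.sum_range_succ _ (n + 1)]
    ring

lemma mul_geom_sum_mul_geom_sum_succ (n : ℕ) (z : R) :
    z * (∑ a ∈ Finset.range n, z ^ a) * ∑ b ∈ Finset.range (n + 1), z ^ b =
      ∑ k ∈ Finset.range n, ((k : R) + 1) * z ^ (k + 1) +
        z ^ (n + 1) * ∑ j ∈ Finset.range n, ((n : R) - j) * z ^ j := by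
  induction n with
  | zero => simp
  | succ n ih =>
    have hT := sub_one_mul_sum_range_sub_mul_pow n z
    push_cast
    rw [sum_range_succ_sub_mul_pow]
    simp only [Finset.sum_range_succ] at ih hT ⊢
    linear_combination ih - z ^ (n + 1) * hT

lemma mul_geom_sum_mul_geom_sum_succ_eq_tent (n : ℕ) (z : R) :
    z * (∑ a ∈ Finset.range n, z ^ a) * ∑ b ∈ Finset.range (n + 1), z ^ b =
      ∑ k ∈ Finset.Icc 1 n, (k : R) * z ^ k +
        ∑ k ∈ Finset.Icc (n + 1) (2 * n), (2 * (n : R) + 1 - k) * z ^ k := by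
  rw [mul_geom_sum_mul_geom_sum_succ, ← Finset.Ico_add_one_right_eq_Icc,
    ← Finset.Ico_add_one_right_eq_Icc,
    Finset.sum_Ico_eq_sum_range, Finset.sum_Ico_eq_sum_range, Finset.mul_sum,
    show 2 * n + 1 - (n + 1) = n by omega, Nat.add_sub_cancel]
  congr 1 <;> refine Finset.sum_congr rfl fun j _ => ?_
  · push_cast; ring
  · push_cast; ring

end CommRing

def tentSinSum (n : ℕ) (t : ℝ) : ℝ :=
  (∑ k ∈ Finset.Icc 1 n, (k : ℝ) * Real.sin (k * t)) +
    ∑ k ∈ Finset.Icc (n + 1) (2 * n), (2 * (n : ℝ) + 1 - k) * Real.sin (k * t)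

lemma im_ofReal_mul_exp_mul_I_pow (c t : ℝ) (k : ℕ) :
    ((c : ℂ) * Complex.exp (t * Complex.I) ^ k).im = c * Real.sin (k * t) := by
  rw [← Complex.exp_nat_mul, Complex.im_ofReal_mul,
    show (k : ℂ) * (t * Complex.I) = ((k * t : ℝ) : ℂ) * Complex.I by push_cast; ring,
    Complex.exp_ofReal_mul_I_im]

lemma tentSinSum_eq_im (n : ℕ) (t : ℝ) :
    tentSinSum n t =
      (Complex.exp (t * Complex.I) * (∑ a ∈ Finset.range n, Complex.exp (t * Complex.I) ^ a) *
        ∑ b ∈ Finset.range (n + 1), Complex.exp (t * Complex.I) ^ b).im := by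
  rw [tentSinSum, mul_geom_sum_mul_geom_sum_succ_eq_tent, Complex.add_im, Complex.im_sum,
    Complex.im_sum]
  congr 1 <;> refine Finset.sum_congr rfl fun k _ => ?_
  · rw [← Complex.ofReal_natCast, im_ofReal_mul_exp_mul_I_pow]
  · rw [← im_ofReal_mul_exp_mul_I_pow]; push_cast; rfl

section NormedDivisionRing

variable {𝕜 : Type*} [NormedDivisionRing 𝕜]

lemma norm_geom_sum_le_of_norm_le_one {z : 𝕜} (hz : ‖z‖ ≤ 1) (m : ℕ) :
    ‖∑ a ∈ Finset.range m, z ^ a‖ ≤ m := by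
  refine (norm_sum_le _ _).trans ?_
  simpa using Finset.sum_le_sum fun a (_ : a ∈ Finset.range m) =>
    (norm_pow z a).trans_le (pow_le_one₀ (norm_nonneg z) hz)

lemma norm_geom_sum_mul_norm_sub_one_le {z : 𝕜} (hz : ‖z‖ = 1) (m : ℕ) :
    ‖∑ a ∈ Finset.range m, z ^ a‖ * ‖z - 1‖ ≤ 2 := by
  rw [← norm_mul, geom_sum_mul]
  calc ‖z ^ m - 1‖ ≤ ‖z ^ m‖ + ‖(1 : 𝕜)‖ := norm_sub_le _ _
    _ = 2 := by rw [norm_pow, hz, one_pow, norm_one]; norm_num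

end NormedDivisionRing

lemma norm_geom_sum_exp_mul_I_le (m : ℕ) {t : ℝ} (hs : Real.sin (t / 2) ≠ 0) :
    ‖∑ a ∈ Finset.range m, Complex.exp (t * Complex.I) ^ a‖ ≤ |Real.sin (t / 2)|⁻¹ := by
  have h := norm_geom_sum_mul_norm_sub_one_le (Complex.norm_exp_ofReal_mul_I t) m
  have hsub : ‖Complex.exp (t * Complex.I) - 1‖ = 2 * |Real.sin (t / 2)| := by
    rw [mul_comm, Complex.norm_exp_I_mul_ofReal_sub_one, norm_mul, Real.norm_eq_abs,
      Real.norm_eq_abs, abs_two]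
  rw [hsub] at h
  rw [← one_div, le_div_iff₀ (abs_pos.2 hs)]
  linarith

lemma abs_tentSinSum_le_norm_mul_norm (n : ℕ) (t : ℝ) :
    |tentSinSum n t| ≤ ‖∑ a ∈ Finset.range n, Complex.exp (t * Complex.I) ^ a‖ *
      ‖∑ b ∈ Finset.range (n + 1), Complex.exp (t * Complex.I) ^ b‖ := by
  rw [tentSinSum_eq_im]
  refine (Complex.abs_im_le_norm _).trans_eq ?_
  rw [norm_mul, norm_mul, Complex.norm_exp_ofReal_mul_I, one_mul]

lemma abs_tentSinSum_le (n : ℕ) (t : ℝ) : |tentSinSum n t| ≤ n * (n + 1) := by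
  have hz := (Complex.norm_exp_ofReal_mul_I t).le
  refine (abs_tentSinSum_le_norm_mul_norm n t).trans ?_
  have hsucc := norm_geom_sum_le_of_norm_le_one hz (n + 1)
  push_cast at hsucc
  exact mul_le_mul (norm_geom_sum_le_of_norm_le_one hz n) hsucc (norm_nonneg _) (by positivity)

lemma abs_tentSinSum_le_inv_sin_sq (n : ℕ) {t : ℝ} (hs : Real.sin (t / 2) ≠ 0) :
    |tentSinSum n t| ≤ (Real.sin (t / 2) ^ 2)⁻¹ := by
  refine (abs_tentSinSum_le_norm_mul_norm n t).trans ?_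
  rw [← sq_abs, sq, mul_inv]
  exact mul_le_mul (norm_geom_sum_exp_mul_I_le n hs) (norm_geom_sum_exp_mul_I_le (n + 1) hs)
    (norm_nonneg _) (by positivity)

lemma sin_half_ne_zero {t : ℝ} (ht₀ : t ≠ 0) (ht : |t| ≤ π) : Real.sin (t / 2) ≠ 0 := by
  obtain ⟨hlo, hhi⟩ := abs_le.1 ht
  have hπ := Real.pi_pos
  rw [Ne, Real.sin_eq_zero_iff_of_lt_of_lt (by linarith) (by linarith)]
  exact div_ne_zero ht₀ two_ne_zero

lemma abs_div_pi_le_abs_sin_half {t : ℝ} (ht : |t| ≤ π) : |t| / π ≤ |Real.sin (t / 2)| := by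
  have h := Real.mul_abs_le_abs_sin (x := t / 2) (by rw [abs_div, abs_two]; linarith)
  rw [abs_div, abs_two] at h
  calc |t| / π = 2 / π * (|t| / 2) := by field_simp
    _ ≤ _ := h

lemma abs_tentSinSum_le_pi_sq_div_sq (n : ℕ) {t : ℝ} (ht₀ : t ≠ 0) (ht : |t| ≤ π) :
    |tentSinSum n t| ≤ π ^ 2 / t ^ 2 := by
  refine (abs_tentSinSum_le_inv_sin_sq n (sin_half_ne_zero ht₀ ht)).trans ?_
  rw [← sq_abs (Real.sin _), ← inv_div (t ^ 2)]
  gcongr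
  calc t ^ 2 / π ^ 2 = (|t| / π) ^ 2 := by rw [div_pow, sq_abs]
    _ ≤ _ := by gcongr; exact abs_div_pi_le_abs_sin_half ht

lemma tentSinSum_neg (n : ℕ) (t : ℝ) : tentSinSum n (-t) = -tentSinSum n t := by
  simp only [tentSinSum, mul_neg, Real.sin_neg, Finset.sum_neg_distrib, neg_add]

lemma continuous_tentSinSum (n : ℕ) : Continuous (tentSinSum n) := by
  unfold tentSinSum
  fun_prop

lemma integral_inv_sq {a b : ℝ} (ha : 0 < a) (hab : a ≤ b) :
    ∫ t in a..b, (t ^ 2)⁻¹ = a⁻¹ - b⁻¹ := by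
  have h0 : (0 : ℝ) ∉ Set.uIcc a b := by
    rw [Set.uIcc_of_le hab]; exact fun h => ha.not_ge h.1
  have := integral_zpow (a := a) (b := b) (n := -2) (Or.inr ⟨by norm_num, h0⟩)
  simp only [zpow_neg, zpow_ofNat] at this
  rw [this]
  norm_num
  ring

lemma integral_abs_tentSinSum_le_of_pos (n : ℕ) {a : ℝ} (ha : 0 < a) (haπ : a ≤ π) :
    ∫ t in a..π, |tentSinSum n t| ≤ π ^ 2 * (a⁻¹ - π⁻¹) := by
  have hpos : ∀ t ∈ Set.Icc a π, t ≠ 0 := fun t ht => (ha.trans_le ht.1).ne'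
  rw [← integral_inv_sq ha haπ, ← intervalIntegral.integral_const_mul]
  refine intervalIntegral.integral_mono_on haπ
    ((continuous_tentSinSum n).abs.intervalIntegrable _ _) ?_ fun t ht => ?_
  · refine ContinuousOn.intervalIntegrable ?_
    rw [Set.uIcc_of_le haπ]
    exact continuousOn_const.mul ((continuousOn_pow 2).inv₀ fun t ht => pow_ne_zero 2 (hpos t ht))
  · have ht₀ := hpos t ht
    rw [← div_eq_mul_inv]
    exact abs_tentSinSum_le_pi_sq_div_sq n ht₀
      (abs_le.2 ⟨by linarith [ha.trans_le ht.1, Real.pi_pos], ht.2⟩)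

lemma integral_abs_tentSinSum_le (n : ℕ) : ∫ t in (-π)..π, |tentSinSum n t| ≤ 4 * π * n := by
  -- roughly where the bounds `n (n + 1)` and `π² / t²` cross
  set a := π / (n + 1)
  have hπ := Real.pi_pos
  have ha : 0 < a := by positivity
  have haπ : a ≤ π := div_le_self hπ.le (by linarith [n.cast_nonneg (α := ℝ)])
  have hint : ∀ u v : ℝ, IntervalIntegrable (fun t => |tentSinSum n t|) volume u v :=
    fun u v => (continuous_tentSinSum n).abs.intervalIntegrable u v
  have hleft : ∫ t in (-π)..(-a), |tentSinSum n t| = ∫ t in a..π, |tentSinSum n t| := by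
    rw [← intervalIntegral.integral_comp_neg]
    simp only [tentSinSum_neg, abs_neg]
  have hmiddle : ∫ t in (-a)..a, |tentSinSum n t| ≤ 2 * π * n := by
    calc ∫ t in (-a)..a, |tentSinSum n t| ≤ ∫ t in (-a)..a, (n : ℝ) * (n + 1) :=
          intervalIntegral.integral_mono_on (by linarith) (hint _ _) intervalIntegrable_const
            fun t _ => abs_tentSinSum_le n t
      _ = 2 * π * n := by
          rw [intervalIntegral.integral_const, smul_eq_mul]
          simp only [a]
          field_simp
          ring
  have hright := integral_abs_tentSinSum_le_of_pos n ha haπ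
  have htail : π ^ 2 * (a⁻¹ - π⁻¹) = π * n := by
    simp only [a, inv_div]
    field_simp
    ring
  rw [← intervalIntegral.integral_add_adjacent_intervals (hint (-π) (-a)) (hint (-a) π),
    ← intervalIntegral.integral_add_adjacent_intervals (hint (-a) a) (hint a π), hleft]
  linarith

/-- Estimates for the kernel sums from the proof of Theorem 4, and ‖φ*_n‖₁ ≤ 1. -/
theorem statement19 :
    ∀ n : ℕ, 1 ≤ n →
      (∀ t : ℝ, 0 < |t| → |t| ≤ π →
        |(∑ k ∈ Finset.Icc 1 n, (k : ℝ) * Real.sin ((k : ℝ) * t)) +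
            ∑ k ∈ Finset.Icc (n + 1) (2 * n),
              (2 * (n : ℝ) + 1 - (k : ℝ)) * Real.sin ((k : ℝ) * t)| ≤
          3 / (2 * Real.sin (t / 2) ^ 2) ∧
        |(∑ k ∈ Finset.Icc 1 n, (k : ℝ) * Real.sin ((k : ℝ) * t)) +
            ∑ k ∈ Finset.Icc (n + 1) (2 * n),
              (2 * (n : ℝ) + 1 - (k : ℝ)) * Real.sin ((k : ℝ) * t)| ≤
          3 * π ^ 2 / (2 * t ^ 2)) ∧
      (∀ t : ℝ, |t| ≤ π →
        |(∑ k ∈ Finset.Icc 1 n, (k : ℝ) * Real.sin ((k : ℝ) * t)) +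
            ∑ k ∈ Finset.Icc (n + 1) (2 * n),
              (2 * (n : ℝ) + 1 - (k : ℝ)) * Real.sin ((k : ℝ) * t)| ≤
          (n : ℝ) * ((n : ℝ) + 1)) ∧
      (∫ t in (-π)..π,
          |(-(1 / (5 * π * (n : ℝ)))) *
            ((∑ k ∈ Finset.Icc 1 n, (k : ℝ) * Real.sin ((k : ℝ) * t)) +
              ∑ k ∈ Finset.Icc (n + 1) (2 * n),
                (2 * (n : ℝ) + 1 - (k : ℝ)) * Real.sin ((k : ℝ) * t))|) ≤ 1 := by
  intro n hn
  have hπ := Real.pi_pos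
  have hn₀ : (0 : ℝ) < n := by exact_mod_cast hn
  refine ⟨fun t ht₀ htπ => ⟨?_, ?_⟩, fun t _ => abs_tentSinSum_le n t, ?_⟩
  · calc |tentSinSum n t| ≤ (Real.sin (t / 2) ^ 2)⁻¹ :=
          abs_tentSinSum_le_inv_sin_sq n (sin_half_ne_zero (abs_pos.1 ht₀) htπ)
      _ ≤ 3 / 2 * (Real.sin (t / 2) ^ 2)⁻¹ := le_mul_of_one_le_left (by positivity) (by norm_num)
      _ = 3 / (2 * Real.sin (t / 2) ^ 2) := by ring
  · calc |tentSinSum n t| ≤ π ^ 2 / t ^ 2 :=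
          abs_tentSinSum_le_pi_sq_div_sq n (abs_pos.1 ht₀) htπ
      _ ≤ 3 / 2 * (π ^ 2 / t ^ 2) := le_mul_of_one_le_left (by positivity) (by norm_num)
      _ = 3 * π ^ 2 / (2 * t ^ 2) := by ring
  · show ∫ t in (-π)..π, |(-(1 / (5 * π * n))) * tentSinSum n t| ≤ 1
    simp_rw [abs_mul]
    rw [intervalIntegral.integral_const_mul, abs_neg, abs_of_pos (by positivity)]
    calc 1 / (5 * π * n) * ∫ t in (-π)..π, |tentSinSum n t| ≤ 1 / (5 * π * n) * (4 * π * n) :=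
          mul_le_mul_of_nonneg_left (integral_abs_tentSinSum_le n) (by positivity)
      _ ≤ 1 := by field_simp; norm_num
end
end
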